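/- arXiv:2010.06261 — 3 statements merged into one kernel-verified Lean document; each statement's English description precedes it below -/
import Mathlib

section
/- The histogram intersection kernel K(f,g) = Σ_{i} min(f(i), g(i)) on functions f, g : I → ℕ with finite support over a finite index set I is positive semidefinite. -/
/-- The histogram intersection kernel `K f g = ∑ i, min (f i) (g i)` over a
finite index set is positive semidefinite. -/
theorem stmt_4 {I : Type*} [Fintype I] :
    ∀ (N : ℕ) (f : Fin N → I → ℕ) (c : Fin N → ℝ),
      0 ≤ ∑ j, ∑ k, c j * c k * ∑ i, (min (f j i) (f k i) : ℝ) := by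
  intro N f c
  classical
  set M := (Finset.univ.sup fun p : Fin N × I => f p.1 p.2) + 1 with hM
  have hbound : ∀ j i, f j i < M := by
    intro j i
    have : f j i ≤ Finset.univ.sup fun p : Fin N × I => f p.1 p.2 :=
      Finset.le_sup (f := fun p : Fin N × I => f p.1 p.2) (Finset.mem_univ (j, i))
    omega
  set φ : Fin N → I → ℕ → ℝ := fun j i t => if t < f j i then (1:ℝ) else 0 with hφ
  have hmin : ∀ j k i, (min (f j i) (f k i) : ℝ) =
      ∑ t ∈ Finset.range M, φ j i t * φ k i t := by
    intro j k i
    have h1 : ∀ t, φ j i t * φ k i t = if t < min (f j i) (f k i) then (1:ℝ) else 0 := by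
      intro t
      by_cases h1 : t < f j i <;> by_cases h2 : t < f k i <;>
        simp [hφ, h1, h2, lt_min_iff]
    rw [Finset.sum_congr rfl fun t _ => h1 t, ← Finset.sum_filter]
    have hfil : (Finset.range M).filter (fun t => t < min (f j i) (f k i)) =
        Finset.range (min (f j i) (f k i)) := by
      ext t
      simp only [Finset.mem_filter, Finset.mem_range]
      have := hbound j i
      omega
    rw [hfil]
    simp
  have expand : ∑ j, ∑ k, c j * c k * ∑ i, (min (f j i) (f k i) : ℝ)
      = ∑ i, ∑ t ∈ Finset.range M, (∑ j, c j * φ j i t) ^ 2 := by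
    have step1 : ∑ j, ∑ k, c j * c k * ∑ i, (min (f j i) (f k i) : ℝ)
        = ∑ j, ∑ k, ∑ i, ∑ t ∈ Finset.range M, (c j * φ j i t) * (c k * φ k i t) := by
      refine Finset.sum_congr rfl fun j _ => Finset.sum_congr rfl fun k _ => ?_
      rw [Finset.mul_sum]
      refine Finset.sum_congr rfl fun i _ => ?_
      rw [hmin j k i, Finset.mul_sum]
      exact Finset.sum_congr rfl fun t _ => by ring
    rw [step1]
    calc ∑ j, ∑ k, ∑ i, ∑ t ∈ Finset.range M, (c j * φ j i t) * (c k * φ k i t)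
        = ∑ j, ∑ i, ∑ k, ∑ t ∈ Finset.range M, (c j * φ j i t) * (c k * φ k i t) :=
          Finset.sum_congr rfl fun j _ => Finset.sum_comm
      _ = ∑ i, ∑ j, ∑ k, ∑ t ∈ Finset.range M, (c j * φ j i t) * (c k * φ k i t) :=
          Finset.sum_comm
      _ = ∑ i, ∑ j, ∑ t ∈ Finset.range M, ∑ k, (c j * φ j i t) * (c k * φ k i t) :=
          Finset.sum_congr rfl fun i _ => Finset.sum_congr rfl fun j _ => Finset.sum_comm
      _ = ∑ i, ∑ t ∈ Finset.range M, ∑ j, ∑ k, (c j * φ j i t) * (c k * φ k i t) :=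
          Finset.sum_congr rfl fun i _ => Finset.sum_comm
      _ = ∑ i, ∑ t ∈ Finset.range M, (∑ j, c j * φ j i t) ^ 2 := by
          refine Finset.sum_congr rfl fun i _ => Finset.sum_congr rfl fun t _ => ?_
          rw [sq, Finset.sum_mul_sum]
  rw [expand]
  exact Finset.sum_nonneg fun i _ => Finset.sum_nonneg fun t _ => sq_nonneg _
end

section
/- The optimal assignment value with a strong kernel is achieved by any greedy matching within equivalence classes: for the 0/1-valued strong base kernel k_b((u,v),(u',v')) = 1 iff the two edges have the same 'refined edge address', the maximum over all bijections β of Σ k_b(e, β(e)) (with dummy elements padded) equals Σ_ε min(|E_ε|, |E'_ε|), where E_ε, E'_ε are the sets of edges with address ε. -/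
/-!
A bijection can pair an element of `E` with an element of `E'` of the same address only inside
matching fibres `E_ε`, `E'_ε`, so it scores at most `min |E_ε| |E'_ε|` on each of them.
Conversely, choosing `min |E_ε| |E'_ε|` elements in every fibre on both sides gives two
address-preserving embeddings of `Σ ε, Fin (min |E_ε| |E'_ε|)`, and any bijection of the padded
sets extending the induced partial matching attains the bound.
-/

/-- The 0/1 base kernel on padded sets: 1 iff both arguments are genuine
elements with the same address, 0 on dummies. -/
def kbPad {E E' A D D' : Type*} [DecidableEq A]
    (a : E → A) (a' : E' → A) : E ⊕ D → E' ⊕ D' → ℕ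
  | Sum.inl e, Sum.inl e' => if a e = a' e' then 1 else 0
  | _, _ => 0

section OptimalAssignment

open Finset

variable {A E E' D D' : Type*} [DecidableEq A] (a : E → A) (a' : E' → A)

lemma kbPad_inr (d : D) (y : E' ⊕ D') : kbPad a a' (Sum.inr d) y = 0 := by
  cases y <;> rfl

lemma kbPad_inl [Fintype E'] [DecidableEq E'] [DecidableEq D'] (e : E) (y : E' ⊕ D') :
    kbPad (D := D) a a' (Sum.inl e) y =
      if y ∈ ({e' | a' e' = a e} : Finset E').map Function.Embedding.inl then 1 else 0 := by
  cases y <;> simp [kbPad, eq_comm]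

theorem sum_kbPad_le [Fintype A] [Fintype E] [Fintype E'] [Fintype D]
    (β : E ⊕ D ≃ E' ⊕ D') :
    ∑ x, kbPad a a' x (β x) ≤ ∑ ε : A, min #{e | a e = ε} #{e' | a' e' = ε} := by
  classical
  rw [Fintype.sum_sum_type]
  simp only [kbPad_inr, sum_const_zero, add_zero, kbPad_inl]
  rw [← sum_fiberwise univ a]
  refine sum_le_sum fun ε _ => ?_
  rw [sum_congr rfl fun e he => by rw [(mem_filter.1 he).2], sum_boole, Nat.cast_id]
  refine le_min (card_le_card (filter_subset _ _)) ?_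
  calc _ ≤ #(({e' | a' e' = ε} : Finset E').map (Function.Embedding.inl (β := D'))) :=
        card_le_card_of_injOn (fun e => β (Sum.inl e)) (fun e he => (mem_filter.1 he).2)
          fun _ _ _ _ h => Sum.inl_injective (β.injective h)
    _ = _ := card_map _

lemma exists_sigma_embedding_fiber [Fintype E] {n : A → ℕ}
    (hn : ∀ ε, n ε ≤ #{e | a e = ε}) :
    ∃ g : (Σ ε, Fin (n ε)) ↪ E, ∀ x, a (g x) = x.1 := by
  have h ε : Nonempty (Fin (n ε) ↪ {e // a e = ε}) :=
    Function.Embedding.nonempty_of_card_le (by simpa [Fintype.card_subtype] using hn ε)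
  exact ⟨(Function.Embedding.sigmaMap (Function.Embedding.refl A) fun ε => (h ε).some).trans
    (Equiv.sigmaFiberEquiv a).toEmbedding, fun x => ((h x.1).some x.2).2⟩

lemma exists_equiv_extend_embeddings {M X Y : Type*} [Finite X] (g : M ↪ X) (g' : M ↪ Y)
    (h : Nonempty (X ≃ Y)) : ∃ β : X ≃ Y, ∀ m, β (g m) = g' m := by
  obtain ⟨β, hβ⟩ := Cardinal.extend_function_finite
    ((Equiv.ofInjective g g.injective).symm.toEmbedding.trans g') h
  exact ⟨β, fun m => by simpa using hβ ⟨g m, m, rfl⟩⟩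

theorem exists_equiv_le_sum_kbPad [Fintype A] [Fintype E] [Fintype E'] [Fintype D]
    [Fintype D'] (hcard : Fintype.card (E ⊕ D) = Fintype.card (E' ⊕ D')) :
    ∃ β : E ⊕ D ≃ E' ⊕ D',
      ∑ ε : A, min #{e | a e = ε} #{e' | a' e' = ε} ≤ ∑ x, kbPad a a' x (β x) := by
  obtain ⟨g, hg⟩ := exists_sigma_embedding_fiber a
    (n := fun ε => min #{e | a e = ε} #{e' | a' e' = ε}) fun _ => min_le_left _ _
  obtain ⟨g', hg'⟩ := exists_sigma_embedding_fiber a'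
    (n := fun ε => min #{e | a e = ε} #{e' | a' e' = ε}) fun _ => min_le_right _ _
  obtain ⟨β, hβ⟩ := exists_equiv_extend_embeddings (g.trans .inl) (g'.trans .inl)
    (Fintype.card_eq.1 hcard)
  have hβ' m : β (Sum.inl (g m)) = Sum.inl (g' m) := hβ m
  refine ⟨β, ?_⟩
  calc ∑ ε : A, min #{e | a e = ε} #{e' | a' e' = ε}
      = Fintype.card (Σ ε, Fin (min #{e | a e = ε} #{e' | a' e' = ε})) := by
        simp [Fintype.card_sigma]
    _ = ∑ m, kbPad a a' (Sum.inl (g m)) (β (Sum.inl (g m))) := by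
        simp [hβ', kbPad, hg, hg']
    _ = ∑ x ∈ univ.map (g.trans .inl), kbPad a a' x (β x) := by rw [sum_map]; rfl
    _ ≤ ∑ x, kbPad a a' x (β x) := sum_le_sum_of_subset (subset_univ _)

end OptimalAssignment

theorem stmt_15_general {A E E' : Type*} [Fintype A] [DecidableEq A]
    [Fintype E] [Fintype E']
    (a : E → A) (a' : E' → A) :
    IsGreatest
      {s : ℕ | ∃ β : (E ⊕ Fin (max (Fintype.card E) (Fintype.card E') - Fintype.card E)) ≃
          (E' ⊕ Fin (max (Fintype.card E) (Fintype.card E') - Fintype.card E')),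
        s = ∑ e, kbPad a a' e (β e)}
      (∑ ε : A, min (Finset.univ.filter fun e => a e = ε).card
        (Finset.univ.filter fun e' => a' e' = ε).card) := by
  refine ⟨?_, fun _ ⟨β, hβ⟩ => hβ ▸ sum_kbPad_le a a' β⟩
  obtain ⟨β, hβ⟩ := exists_equiv_le_sum_kbPad a a'
    (D := Fin (max (Fintype.card E) (Fintype.card E') - Fintype.card E))
    (D' := Fin (max (Fintype.card E) (Fintype.card E') - Fintype.card E'))
    (by simp only [Fintype.card_sum, Fintype.card_fin]; omega)
  exact ⟨β, le_antisymm hβ (sum_kbPad_le a a' β)⟩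

/-- The optimal assignment value for the 0/1 strong base kernel given by a
`refined edge address` equals `∑_ε min (|E_ε|) (|E'_ε|)`: padding the smaller
set with dummies, the maximum over all bijections of `∑ e, k_b (e, β e)` is
attained and equals the sum of the minima of the fiber cardinalities. -/
theorem stmt_15 {A E E' : Type*} [Fintype A] [DecidableEq A]
    [Fintype E] [Fintype E'] [DecidableEq E] [DecidableEq E']
    (a : E → A) (a' : E' → A) :
    IsGreatest
      {s : ℕ | ∃ β : (E ⊕ Fin (max (Fintype.card E) (Fintype.card E') - Fintype.card E)) ≃
          (E' ⊕ Fin (max (Fintype.card E) (Fintype.card E') - Fintype.card E')),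
        s = ∑ e, kbPad a a' e (β e)}
      (∑ ε : A, min (Finset.univ.filter fun e => a e = ε).card
        (Finset.univ.filter fun e' => a' e' = ε).card) :=
  stmt_15_general a a'
end

section
/- The function K(E,E') = Σ_ε min(|E_ε|, |E'_ε|), summing minima of fiber cardinalities of address functions, is a positive semidefinite kernel on pairs (finite set, address function). -/
/-- `K((E,a),(E',a')) = ∑_ε min |a⁻¹(ε)| |a'⁻¹(ε)|`, summing minima of fiber
cardinalities of address functions, is a positive semidefinite kernel on
pairs (finite set, address function). -/
theorem stmt_16 {A : Type*} [Fintype A] [DecidableEq A] :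
    ∀ (N : ℕ) (obj : Fin N → Σ n : ℕ, Fin n → A) (c : Fin N → ℝ),
      0 ≤ ∑ i, ∑ j, c i * c j *
        ∑ ε : A, (min (Finset.univ.filter fun e => (obj i).2 e = ε).card
          (Finset.univ.filter fun e => (obj j).2 e = ε).card : ℝ) := by
  intro N obj c
  classical
  set M : ℕ := ∑ i, (obj i).1 with hM
  have hbound : ∀ i (ε : A),
      (Finset.univ.filter fun e => (obj i).2 e = ε).card ≤ M := by
    intro i ε
    have h1 : (Finset.univ.filter fun e => (obj i).2 e = ε).card ≤ (obj i).1 := by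
      calc (Finset.univ.filter fun e => (obj i).2 e = ε).card
          ≤ (Finset.univ : Finset (Fin (obj i).1)).card := Finset.card_filter_le _ _
        _ = (obj i).1 := by simp
    rw [hM]
    exact h1.trans (Finset.single_le_sum (f := fun j => (obj j).1) (fun j _ => Nat.zero_le _) (Finset.mem_univ i))
  have hmin : ∀ m n : ℕ, m ≤ M → n ≤ M →
      (min m n : ℝ) = ∑ k ∈ Finset.range M,
        (if k < m then (1:ℝ) else 0) * (if k < n then 1 else 0) := by
    intro m n hm hn
    have hif : ∀ k, (if k < m then (1:ℝ) else 0) * (if k < n then 1 else 0)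
        = if k < min m n then 1 else 0 := by
      intro k
      by_cases h1 : k < m <;> by_cases h2 : k < n <;>
        simp [h1, h2, lt_min_iff]
    simp only [hif]
    rw [Finset.sum_boole]
    have : (Finset.range M).filter (fun k => k < min m n) = Finset.range (min m n) := by
      ext k
      simp only [Finset.mem_filter, Finset.mem_range]
      omega
    rw [this, Finset.card_range]
    push_cast
    rfl
  set f : Fin N → A → ℕ → ℝ := fun i ε k =>
    if k < (Finset.univ.filter fun e => (obj i).2 e = ε).card then 1 else 0 with hf
  have hrw : ∀ i j, (∑ ε : A, (min (Finset.univ.filter fun e => (obj i).2 e = ε).card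
      (Finset.univ.filter fun e => (obj j).2 e = ε).card : ℝ))
      = ∑ ε : A, ∑ k ∈ Finset.range M, f i ε k * f j ε k := by
    intro i j
    exact Finset.sum_congr rfl fun ε _ => hmin _ _ (hbound i ε) (hbound j ε)
  have swap4 : ∀ (F : Fin N → Fin N → A → ℕ → ℝ),
      (∑ i, ∑ j, ∑ ε : A, ∑ k ∈ Finset.range M, F i j ε k)
        = ∑ ε : A, ∑ k ∈ Finset.range M, ∑ i, ∑ j, F i j ε k := by
    intro F
    have h1 : ∀ i, (∑ j, ∑ ε : A, ∑ k ∈ Finset.range M, F i j ε k)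
        = ∑ ε : A, ∑ k ∈ Finset.range M, ∑ j, F i j ε k := by
      intro i
      rw [Finset.sum_comm]
      exact Finset.sum_congr rfl fun ε _ => Finset.sum_comm
    simp only [h1]
    rw [Finset.sum_comm]
    exact Finset.sum_congr rfl fun ε _ => Finset.sum_comm
  have key : (∑ i, ∑ j, c i * c j *
      ∑ ε : A, (min (Finset.univ.filter fun e => (obj i).2 e = ε).card
        (Finset.univ.filter fun e => (obj j).2 e = ε).card : ℝ))
      = ∑ ε : A, ∑ k ∈ Finset.range M, (∑ i, c i * f i ε k) ^ 2 := by
    simp only [hrw, Finset.mul_sum]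
    rw [swap4 (fun i j ε k => c i * c j * (f i ε k * f j ε k))]
    refine Finset.sum_congr rfl fun ε _ => Finset.sum_congr rfl fun k _ => ?_
    rw [sq, Finset.sum_mul_sum]
    exact Finset.sum_congr rfl fun i _ => Finset.sum_congr rfl fun j _ => by ring
  rw [key]
  exact Finset.sum_nonneg fun ε _ => Finset.sum_nonneg fun k _ => sq_nonneg _
end
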